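/- arXiv:1710.00800 — 2 statements merged into one kernel-verified Lean document; each statement's English description precedes it below -/
import Mathlib

section
/- Let r ∈ (0,1) and set α = (1−r)·log 2 / ((1+r)·log(1+r) + r·log(1/(4r))). Then for any x, y > 0 there exist p, q ∈ (0,1) satisfying 1/p' + 1/q' = 1/r' (i.e., (p−1)/p + (q−1)/q = (r−1)/r) such that A(p,q,r)^{α·r/(1−r)} · x^{((1−p)/p)·(r/(1−r))} · y^{((1−q)/q)·(r/(1−r))} ≥ x + y. -/
open Real

/-- Young's inequality constant `c_m = m^{1/m} / |m'|^{1/m'}` where `m' = m/(m-1)`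
is the Hölder conjugate (so `1/m' = (m-1)/m`). -/
noncomputable def youngC (m : ℝ) : ℝ :=
  m ^ (1 / m) / |m / (m - 1)| ^ ((m - 1) / m)

/-- The constant `A(p,q,r) = (c_p c_q / c_r) · r^{2/r} / (p^{2/p} q^{2/q})`. -/
noncomputable def Aconst (p q r : ℝ) : ℝ :=
  (youngC p * youngC q / youngC r) * r ^ (2 / r) / (p ^ (2 / p) * q ^ (2 / q))

/-!
Write `r = 1/(1+s)`, `a = x/(x+y)` and take `p = 1/(1+as)`, `q = 1/(1+(1-a)s)`. Then
`1/p' + 1/q' = 1/r'`, the exponents of `x` and `y` become `a` and `1-a`, and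
`x^a y^(1-a) = (x+y) e^{-H(a)}` with `H` the binary entropy. With `φ(t) = (1+t) log(1+t)` and
`ψ(s,a) = φ(s) - φ(as) - φ((1-a)s)` one has `log A(p,q,r) = s H(a) - ψ(s,a)`, and the choice of `α`
makes the claim equivalent to `F(a) = ψ(s,½) H(a) - log 2 · ψ(s,a) ≥ 0`.

`F` is symmetric about `½`, vanishes at `0` and `½`, and `F'(½) = 0`. On `(0,½)` the sign of `F''`
is that of `log 2 · s²(2+s) - ψ(s,½)((1+s)/(a(1-a)) + s²)`, which can only switch from `-` to `+`.
So `F` is concave up to the switch point and decreasing after it, hence nonnegative.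
-/

open Set

theorem exists_threshold_of_monotoneOn {P : ℝ → Prop} {a b : ℝ} (hab : a ≤ b)
    (hP : MonotoneOn P (Ioo a b)) :
    ∃ c ∈ Icc a b, (∀ x ∈ Ioo a c, ¬ P x) ∧ ∀ x ∈ Ioo c b, P x := by
  set S := insert b {x ∈ Ioo a b | P x}
  have hlower : a ∈ lowerBounds S := by
    rintro x (rfl | hx)
    exacts [hab, hx.1.1.le]
  have hbdd : BddBelow S := ⟨a, hlower⟩
  have hcb : sInf S ≤ b := csInf_le hbdd (mem_insert _ _)
  refine ⟨sInf S, ⟨le_csInf (insert_nonempty _ _) hlower, hcb⟩, ?_, ?_⟩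
  · intro x hx hPx
    exact (csInf_le hbdd (mem_insert_of_mem _ ⟨⟨hx.1, hx.2.trans_le hcb⟩, hPx⟩)).not_gt hx.2
  · intro x hx
    obtain ⟨y, hyS, hyx⟩ := exists_lt_of_csInf_lt (insert_nonempty _ _) hx.1
    rcases hyS with rfl | ⟨hy, hPy⟩
    · exact absurd hx.2 hyx.not_gt
    · exact hP hy ⟨hy.1.trans hyx, hx.2⟩ hyx.le hPy

theorem nonneg_of_hasDerivAt2_of_monotoneOn_sign {f f' f'' : ℝ → ℝ} {a b : ℝ} (hab : a ≤ b)
    (hf : ContinuousOn f (Icc a b))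
    (hf' : ∀ x ∈ Ioc a b, HasDerivAt f (f' x) x)
    (hf'' : ∀ x ∈ Ioc a b, HasDerivAt f' (f'' x) x)
    (hsign : MonotoneOn (fun x => 0 ≤ f'' x) (Ioo a b))
    (ha : f a = 0) (hb : f b = 0) (hb' : f' b = 0) :
    ∀ x ∈ Icc a b, 0 ≤ f x := by
  obtain ⟨c, hc, hneg, hpos⟩ := exists_threshold_of_monotoneOn hab hsign
  have hright : ∀ x ∈ Icc c b, 0 ≤ f x := by
    have hf'_mono : MonotoneOn f' (Ioc c b) := by
      refine monotoneOn_of_hasDerivWithinAt_nonneg (convex_Ioc c b)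
        (fun x hx => (hf'' x ⟨hc.1.trans_lt hx.1, hx.2⟩).continuousAt.continuousWithinAt)
        ?_ (by simpa only [interior_Ioc] using hpos)
      rw [interior_Ioc]
      exact fun x hx => (hf'' x ⟨hc.1.trans_lt hx.1, hx.2.le⟩).hasDerivWithinAt
    have hf_anti : AntitoneOn f (Icc c b) := by
      refine antitoneOn_of_hasDerivWithinAt_nonpos (f' := f') (convex_Icc c b)
        (hf.mono (Icc_subset_Icc_left hc.1)) ?_ ?_ <;> rw [interior_Icc]
      · exact fun x hx => (hf' x ⟨hc.1.trans_lt hx.1, hx.2.le⟩).hasDerivWithinAt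
      · intro x hx
        rw [← hb']
        exact hf'_mono ⟨hx.1, hx.2.le⟩ ⟨hx.1.trans hx.2, le_rfl⟩ hx.2.le
    intro x hx
    rw [← hb]
    exact hf_anti hx (right_mem_Icc.2 hc.2) hx.2
  have hconc : ConcaveOn ℝ (Icc a c) f := by
    refine concaveOn_of_hasDerivWithinAt2_nonpos (f' := f') (f'' := f'') (convex_Icc a c)
      (hf.mono (Icc_subset_Icc_right hc.2)) ?_ ?_ ?_ <;> rw [interior_Icc]
    · exact fun x hx => (hf' x ⟨hx.1, hx.2.le.trans hc.2⟩).hasDerivWithinAt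
    · exact fun x hx => (hf'' x ⟨hx.1, hx.2.le.trans hc.2⟩).hasDerivWithinAt
    · exact fun x hx => (not_le.1 (hneg x hx)).le
  intro x hx
  rcases le_total x c with hxc | hcx
  · calc 0 ≤ min (f a) (f c) := by
          rw [ha]; exact le_min le_rfl (hright c (left_mem_Icc.2 hc.2))
      _ ≤ f x := hconc.min_le_of_mem_Icc (left_mem_Icc.2 hc.1) (right_mem_Icc.2 hc.1) ⟨hx.1, hxc⟩
  · exact hright x ⟨hcx, hx.2⟩

namespace AlgebraicEpi

noncomputable def phi (t : ℝ) : ℝ := (1 + t) * log (1 + t)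

noncomputable def psi (s a : ℝ) : ℝ := phi s - phi (a * s) - phi ((1 - a) * s)

noncomputable def F (s a : ℝ) : ℝ := psi s 2⁻¹ * binEntropy a - log 2 * psi s a

noncomputable def dF (s a : ℝ) : ℝ :=
  psi s 2⁻¹ * (log (1 - a) - log a) - log 2 * (s * (log (1 + (1 - a) * s) - log (1 + a * s)))

noncomputable def d2F (s a : ℝ) : ℝ :=
  (log 2 * s ^ 2 * (2 + s) - psi s 2⁻¹ * ((1 + s) / (a * (1 - a)) + s ^ 2)) /
    (1 + s + a * (1 - a) * s ^ 2)

theorem hasDerivAt_phi {t : ℝ} (ht : 1 + t ≠ 0) : HasDerivAt phi (log (1 + t) + 1) t :=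
  (hasDerivAt_mul_log ht).comp_const_add 1 t

@[fun_prop]
theorem continuous_phi : Continuous phi :=
  continuous_mul_log.comp (continuous_const.add continuous_id)

theorem phi_zero : phi 0 = 0 := by simp [phi]

theorem psi_one_sub (s a : ℝ) : psi s (1 - a) = psi s a := by
  rw [psi, psi, sub_sub_cancel]; ring

theorem psi_zero (s : ℝ) : psi s 0 = 0 := by simp [psi, phi_zero]

theorem psi_half (s : ℝ) : psi s 2⁻¹ = phi s - 2 * phi (s / 2) := by
  rw [psi, show (1 : ℝ) - 2⁻¹ = 2⁻¹ by norm_num, inv_mul_eq_div]; ring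

theorem psi_half_pos {s : ℝ} (hs : 0 < s) : 0 < psi s 2⁻¹ := by
  have h := strictConvexOn_mul_log.2 (mem_Ici.2 zero_le_one) (mem_Ici.2 (by linarith))
    (by linarith : (1 : ℝ) ≠ 1 + s) (by norm_num : (0 : ℝ) < 2⁻¹) (by norm_num : (0 : ℝ) < 2⁻¹)
    (by norm_num)
  have e : (2⁻¹ : ℝ) • (1 : ℝ) + (2⁻¹ : ℝ) • (1 + s) = 1 + s / 2 := by
    simp only [smul_eq_mul]; ring
  rw [e] at h
  simp only [smul_eq_mul, log_one, mul_zero, zero_add] at h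
  rw [psi_half, phi, phi]
  linarith

theorem hasDerivAt_psi {s a : ℝ} (h₁ : 0 < 1 + a * s) (h₂ : 0 < 1 + (1 - a) * s) :
    HasDerivAt (psi s) (s * (log (1 + (1 - a) * s) - log (1 + a * s))) a := by
  have hl := (hasDerivAt_phi h₁.ne').comp a ((hasDerivAt_id a).mul_const s)
  have hr := (hasDerivAt_phi h₂.ne').comp a (((hasDerivAt_id a).const_sub 1).mul_const s)
  refine (((hasDerivAt_const a (phi s)).sub hl).sub hr).congr_deriv ?_
  ring

theorem hasDerivAt_F {s a : ℝ} (ha : a ∈ Ioo 0 1) (hs : 0 ≤ s) :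
    HasDerivAt (F s) (dF s a) a := by
  have h₁ : 0 < 1 + a * s := by nlinarith [ha.1]
  have h₂ : 0 < 1 + (1 - a) * s := by nlinarith [ha.2]
  exact ((hasDerivAt_binEntropy ha.1.ne' ha.2.ne).const_mul _).sub
    ((hasDerivAt_psi h₁ h₂).const_mul _)

theorem hasDerivAt_dF {s a : ℝ} (ha : a ∈ Ioo 0 1) (hs : 0 ≤ s) :
    HasDerivAt (dF s) (d2F s a) a := by
  obtain ⟨ha₀, ha₁⟩ := ha
  have h₁ : 0 < 1 + a * s := by nlinarith
  have h₂ : 0 < 1 + (1 - a) * s := by nlinarith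
  have h₃ : 1 - a ≠ 0 := by linarith
  have hlb := ((hasDerivAt_id a).const_sub 1).log h₃
  have hla := (hasDerivAt_id a).log ha₀.ne'
  have hl₁ := ((hasDerivAt_id a).mul_const s).const_add 1 |>.log h₁.ne'
  have hl₂ := (((hasDerivAt_id a).const_sub 1).mul_const s).const_add 1 |>.log h₂.ne'
  refine (((hlb.sub hla).const_mul (psi s 2⁻¹)).sub
    (((hl₂.sub hl₁).const_mul s).const_mul (log 2))).congr_deriv ?_
  have h₄ : 1 + s + a * (1 - a) * s ^ 2 = (1 + a * s) * (1 + (1 - a) * s) := by ring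
  rw [d2F, h₄, id]
  field_simp
  ring

theorem continuous_F (s : ℝ) : Continuous (F s) := by
  unfold F psi
  fun_prop

theorem F_zero (s : ℝ) : F s 0 = 0 := by simp [F, psi_zero]

theorem F_half (s : ℝ) : F s 2⁻¹ = 0 := by rw [F, binEntropy_two_inv]; ring

theorem dF_half (s : ℝ) : dF s 2⁻¹ = 0 := by
  rw [dF, show (1 : ℝ) - 2⁻¹ = 2⁻¹ by norm_num]; ring

theorem F_one_sub (s a : ℝ) : F s (1 - a) = F s a := by
  rw [F, F, binEntropy_one_sub, psi_one_sub]

theorem monotoneOn_d2F_nonneg {s : ℝ} (hs : 0 < s) :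
    MonotoneOn (fun a => 0 ≤ d2F s a) (Ioo 0 2⁻¹) := by
  intro a ha b hb hab h
  have hw : 0 < a * (1 - a) := mul_pos ha.1 (by linarith [ha.2])
  have hwb : a * (1 - a) ≤ b * (1 - b) := by nlinarith [hb.2]
  have hpos : ∀ c ∈ Ioo (0 : ℝ) 2⁻¹, 0 < 1 + s + c * (1 - c) * s ^ 2 := fun c hc => by
    have : 0 < c * (1 - c) := mul_pos hc.1 (by linarith [hc.2])
    positivity
  rw [d2F, le_div_iff₀ (hpos a ha), zero_mul] at h
  rw [d2F, le_div_iff₀ (hpos b hb), zero_mul]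
  refine h.trans (sub_le_sub_left ?_ _)
  have := (psi_half_pos hs).le
  gcongr

theorem F_nonneg_of_le_half {s : ℝ} (hs : 0 < s) {a : ℝ} (ha : a ∈ Icc 0 2⁻¹) : 0 ≤ F s a := by
  have hsub : Ioc (0 : ℝ) 2⁻¹ ⊆ Ioo 0 1 := Ioc_subset_Ioo_right (by norm_num)
  exact nonneg_of_hasDerivAt2_of_monotoneOn_sign (by norm_num) (continuous_F s).continuousOn
    (fun x hx => hasDerivAt_F (hsub hx) hs.le) (fun x hx => hasDerivAt_dF (hsub hx) hs.le)
    (monotoneOn_d2F_nonneg hs) (F_zero s) (F_half s) (dF_half s) a ha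

theorem F_nonneg {s : ℝ} (hs : 0 < s) {a : ℝ} (ha : a ∈ Icc 0 1) : 0 ≤ F s a := by
  rcases le_total a 2⁻¹ with h | h
  · exact F_nonneg_of_le_half hs ⟨ha.1, h⟩
  · rw [← F_one_sub]
    exact F_nonneg_of_le_half hs ⟨by linarith [ha.2], by linarith⟩

theorem sub_psi_half_eq {s : ℝ} (hs : s ≠ -2) :
    s * log 2 - psi s 2⁻¹ = phi (1 + s) - phi s - 2 * log 2 := by
  have h : 1 + s / 2 = (1 + (1 + s)) / 2 := by ring
  rw [psi_half, phi, phi, phi, h, log_div (fun h => hs (by linarith)) two_ne_zero]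
  ring

theorem sub_psi_half_pos {s : ℝ} (hs : 0 < s) : 0 < s * log 2 - psi s 2⁻¹ := by
  have hmono : StrictMonoOn (fun t => phi (1 + t) - phi t) (Ici 0) := by
    refine strictMonoOn_of_hasDerivWithinAt_pos (convex_Ici 0)
      (f' := fun t => (log (1 + (1 + t)) + 1) - (log (1 + t) + 1)) (by fun_prop) ?_ ?_ <;>
      rw [interior_Ici]
    · intro t ht
      exact (((hasDerivAt_phi (by linarith [mem_Ioi.1 ht])).comp_const_add 1 t).sub
        (hasDerivAt_phi (by linarith [mem_Ioi.1 ht]))).hasDerivWithinAt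
    · intro t ht
      have := log_lt_log (by linarith [mem_Ioi.1 ht]) (by linarith : 1 + t < 1 + (1 + t))
      linarith
  have h := hmono self_mem_Ici (mem_Ici.2 hs.le) hs
  have h₀ : phi (1 + 0) - phi 0 = 2 * log 2 := by norm_num [phi]
  rw [sub_psi_half_eq (by linarith)]
  linarith

theorem binEntropy_le_mul_log_two_div {s a : ℝ} (hs : 0 < s) (ha : a ∈ Icc 0 1) :
    binEntropy a ≤ (s * binEntropy a - psi s a) * (log 2 / (s * log 2 - psi s 2⁻¹)) := by
  rw [mul_div_assoc', le_div_iff₀ (sub_psi_half_pos hs)]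
  have hF := F_nonneg hs ha
  rw [F] at hF
  linarith

theorem inv_one_add_mem_Ioo {t : ℝ} (ht : 0 < t) : (1 + t)⁻¹ ∈ Ioo 0 1 :=
  ⟨by positivity, inv_lt_one_of_one_lt₀ (by linarith)⟩

theorem one_sub_inv_one_add_div {t : ℝ} (ht : 1 + t ≠ 0) : (1 - (1 + t)⁻¹) / (1 + t)⁻¹ = t := by
  field_simp; ring

theorem inv_one_add_sub_one_div {t : ℝ} (ht : 1 + t ≠ 0) : ((1 + t)⁻¹ - 1) / (1 + t)⁻¹ = -t := by
  rw [← neg_sub, neg_div, one_sub_inv_one_add_div ht]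

theorem youngC_inv_one_add {t : ℝ} (ht : 0 < t) :
    youngC (1 + t)⁻¹ = exp (-phi t - t * log t) := by
  have h : 0 < 1 + t := by linarith
  have ht' : t ≠ 0 := ht.ne'
  have hconj : (1 + t)⁻¹ / ((1 + t)⁻¹ - 1) = -t⁻¹ := by
    field_simp
    rw [show 1 - (1 + t) = -t by ring, div_neg, div_self ht']
  have habs : |(1 + t)⁻¹ / ((1 + t)⁻¹ - 1)| = t⁻¹ := by
    rw [hconj, abs_neg, abs_of_pos (inv_pos.2 ht)]
  rw [youngC, habs, rpow_def_of_pos (inv_pos.2 h), rpow_def_of_pos (inv_pos.2 ht), ← exp_sub, phi,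
    log_inv, log_inv]
  congr 1
  field_simp
  ring

theorem inv_one_add_rpow {t : ℝ} (ht : 0 < 1 + t) :
    (1 + t)⁻¹ ^ (2 / (1 + t)⁻¹) = exp (-2 * phi t) := by
  rw [rpow_def_of_pos (inv_pos.2 ht), log_inv, phi, div_inv_eq_mul]
  ring_nf

theorem Aconst_inv_one_add {s a : ℝ} (hs : 0 < s) (ha : a ∈ Ioo 0 1) :
    Aconst (1 + a * s)⁻¹ (1 + (1 - a) * s)⁻¹ (1 + s)⁻¹ = exp (s * binEntropy a - psi s a) := by
  have hb : 0 < 1 - a := sub_pos.2 ha.2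
  rw [Aconst, youngC_inv_one_add (mul_pos ha.1 hs), youngC_inv_one_add (mul_pos hb hs),
    youngC_inv_one_add hs, inv_one_add_rpow (t := a * s) (by nlinarith [mul_pos ha.1 hs]),
    inv_one_add_rpow (t := (1 - a) * s) (by nlinarith [mul_pos hb hs]),
    inv_one_add_rpow (t := s) (by linarith)]
  simp only [← exp_add, ← exp_sub]
  rw [binEntropy, psi, log_mul ha.1.ne' hs.ne', log_mul hb.ne' hs.ne', log_inv, log_inv]
  ring_nf

theorem rpow_mul_rpow_one_sub_eq {x y : ℝ} (hx : 0 < x) (hy : 0 < y) :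
    x ^ (x / (x + y)) * y ^ (1 - x / (x + y)) = (x + y) * exp (-binEntropy (x / (x + y))) := by
  have hxy : 0 < x + y := add_pos hx hy
  have h : 1 - x / (x + y) = y / (x + y) := by field_simp; ring
  rw [h, binEntropy, h, rpow_def_of_pos hx, rpow_def_of_pos hy, ← exp_add, inv_div, inv_div,
    log_div hxy.ne' hx.ne', log_div hxy.ne' hy.ne', ← exp_log hxy, ← exp_add, exp_log hxy]
  congr 1
  field_simp
  ring

theorem alpha_mul_inv {s : ℝ} (hs : 0 < s) :
    (1 - (1 + s)⁻¹) * log 2 / ((1 + (1 + s)⁻¹) * log (1 + (1 + s)⁻¹) +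
      (1 + s)⁻¹ * log (1 / (4 * (1 + s)⁻¹))) * s⁻¹ = log 2 / (s * log 2 - psi s 2⁻¹) := by
  have h1 : 1 + (1 + s)⁻¹ = (1 + (1 + s)) / (1 + s) := by field_simp; ring
  have h2 : 1 / (4 * (1 + s)⁻¹) = (1 + s) / 2 ^ 2 := by field_simp; norm_num
  rw [h1, h2, log_div (by linarith) (by linarith), log_div (by linarith) (by norm_num), log_pow,
    sub_psi_half_eq (by linarith), phi, phi]
  field_simp
  ring

end AlgebraicEpi

open AlgebraicEpi in
theorem algebraic_epi_lemma (r : ℝ) (hr : r ∈ Set.Ioo (0 : ℝ) 1)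
    (α : ℝ)
    (hα : α = (1 - r) * Real.log 2 /
      ((1 + r) * Real.log (1 + r) + r * Real.log (1 / (4 * r)))) :
    ∀ x y : ℝ, 0 < x → 0 < y →
      ∃ p q : ℝ, p ∈ Set.Ioo (0 : ℝ) 1 ∧ q ∈ Set.Ioo (0 : ℝ) 1 ∧
        (p - 1) / p + (q - 1) / q = (r - 1) / r ∧
        Aconst p q r ^ (α * (r / (1 - r))) *
          x ^ (((1 - p) / p) * (r / (1 - r))) *
          y ^ (((1 - q) / q) * (r / (1 - r))) ≥ x + y := by
  intro x y hx hy
  obtain ⟨s, hs, rfl⟩ : ∃ s, 0 < s ∧ r = (1 + s)⁻¹ :=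
    ⟨(1 - r) / r, div_pos (sub_pos.2 hr.2) hr.1, by have := hr.1.ne'; field_simp; ring⟩
  have hxy : 0 < x + y := add_pos hx hy
  have ha : x / (x + y) ∈ Ioo 0 1 := ⟨div_pos hx hxy, (div_lt_one hxy).2 (by linarith)⟩
  have hu : 0 < x / (x + y) * s := mul_pos ha.1 hs
  have hv : 0 < (1 - x / (x + y)) * s := mul_pos (sub_pos.2 ha.2) hs
  have hr_ratio : (1 + s)⁻¹ / (1 - (1 + s)⁻¹) = s⁻¹ := by
    rw [← inv_div, one_sub_inv_one_add_div (by linarith)]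
  refine ⟨_, _, inv_one_add_mem_Ioo hu, inv_one_add_mem_Ioo hv, ?_, ?_⟩
  · rw [inv_one_add_sub_one_div (by linarith), inv_one_add_sub_one_div (by linarith),
      inv_one_add_sub_one_div (by linarith)]
    ring
  · rw [hr_ratio, one_sub_inv_one_add_div (by linarith), one_sub_inv_one_add_div (by linarith),
      mul_inv_cancel_right₀ hs.ne', mul_inv_cancel_right₀ hs.ne', mul_assoc,
      rpow_mul_rpow_one_sub_eq hx hy, Aconst_inv_one_add hs ha, ← exp_mul, hα, alpha_mul_inv hs,
      ge_iff_le, mul_left_comm, ← exp_add]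
    exact le_mul_of_one_le_right hxy.le
      (one_le_exp (by linarith [binEntropy_le_mul_log_two_div hs (Ioo_subset_Icc_self ha)]))
end

section
/- For all x, y > 0, one has (x+y)^{x+y} · (x+1)^{x+1} · (y+1)^{y+1} > x^x · y^y · (x+y+1)^{x+y+1}. Equivalently, the quantity A(p,q,r) expressed in the variables x = (1−p)/p, y = (1−q)/q (with r = 1/(x+y+1)) is strictly greater than 1. -/
/-!
With `φ t = t log t - (t + 1) log (t + 1)`, the logarithm of the ratio of the two sides is
`φ (x + y) - φ x - φ y`. Since `φ' t = log (t / (t + 1))` is strictly increasing, `φ` is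
strictly convex on `[0, ∞)`, and `φ 0 = 0`, so `φ` is strictly superadditive. Substituting
`p = 1 / (x + 1)`, `q = 1 / (y + 1)`, `r = 1 / (x + y + 1)` into the Young constants turns
`A(p, q, r)` into exactly this ratio.
-/

open Real

theorem StrictConvexOn.add_lt_add_apply_zero {f : ℝ → ℝ}
    (hf : StrictConvexOn ℝ (Set.Ici 0) f) {x y : ℝ} (hx : 0 < x) (hy : 0 < y) :
    f x + f y < f 0 + f (x + y) := by
  have chord : ∀ {a b : ℝ}, 0 < a → 0 < b →
      f a < b / (a + b) * f 0 + a / (a + b) * f (a + b) := by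
    intro a b ha hb
    have h := hf.2 Set.self_mem_Ici (Set.mem_Ici.2 (add_pos ha hb).le) (add_pos ha hb).ne
      (div_pos hb (add_pos ha hb)) (div_pos ha (add_pos ha hb)) (by field_simp; ring)
    simpa only [smul_eq_mul, mul_zero, zero_add, div_mul_cancel₀ a (add_pos ha hb).ne'] using h
  have hxy := chord hx hy
  have hyx := chord hy hx
  rw [add_comm y x] at hyx
  have hsum : y / (x + y) + x / (x + y) = 1 := by field_simp; ring
  linear_combination hxy + hyx + (f 0 + f (x + y)) * hsum

theorem strictConvexOn_mul_log_sub_add_one_mul_log :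
    StrictConvexOn ℝ (Set.Ici 0) (fun t => t * log t - (t + 1) * log (t + 1)) := by
  have hderiv : ∀ t : ℝ, 0 < t →
      HasDerivAt (fun t => t * log t - (t + 1) * log (t + 1)) (log t - log (t + 1)) t := by
    intro t ht
    have hshift := (hasDerivAt_mul_log (x := t + 1) (by linarith)).comp t
      ((hasDerivAt_id t).add_const 1)
    have hshift' : HasDerivAt (fun t => (t + 1) * log (t + 1)) (log (t + 1) + 1) t := by
      simpa [Function.comp_def] using hshift
    exact ((hasDerivAt_mul_log ht.ne').sub hshift').congr_deriv (by ring)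
  refine StrictMonoOn.strictConvexOn_of_deriv (convex_Ici 0) (by fun_prop) ?_
  rw [interior_Ici]
  intro a (ha : 0 < a) b (hb : 0 < b) hab
  rw [(hderiv a ha).deriv, (hderiv b hb).deriv, sub_lt_sub_iff, ← log_mul ha.ne' (by positivity),
    ← log_mul hb.ne' (by positivity)]
  exact log_lt_log (by positivity) (by nlinarith)

theorem youngC_one_div {t : ℝ} (ht : 1 < t) :
    youngC (1 / t) = (t ^ t * (t - 1) ^ (t - 1))⁻¹ := by
  have ht0 : 0 < t := by linarith
  have ht1 : 0 < t - 1 := by linarith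
  have hexp : (1 / t - 1) / (1 / t) = -(t - 1) := by field_simp; ring
  have hbase : 1 / t / (1 / t - 1) = -(t - 1)⁻¹ := by
    have h1t : 1 - t ≠ 0 := (sub_neg.2 ht).ne
    field_simp
    ring
  rw [youngC, one_div_one_div, hexp, hbase, abs_neg, abs_of_pos (inv_pos.2 ht1),
    inv_rpow ht1.le, rpow_neg ht1.le, inv_inv, one_div, inv_rpow ht0.le, mul_inv, div_eq_mul_inv]

theorem one_div_rpow_two_div_one_div {t : ℝ} (ht : 0 ≤ t) :
    (1 / t) ^ (2 / (1 / t)) = ((t ^ t) ^ 2)⁻¹ := by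
  rw [div_div_eq_mul_div, div_one, mul_comm, rpow_mul (by positivity), one_div,
    inv_rpow ht, rpow_two, inv_pow]

theorem Aconst_one_div {s t u : ℝ} (hs : 1 < s) (ht : 1 < t) (hu : 1 < u) :
    Aconst (1 / s) (1 / t) (1 / u) =
      s ^ s * t ^ t * (u - 1) ^ (u - 1) / ((s - 1) ^ (s - 1) * (t - 1) ^ (t - 1) * u ^ u) := by
  have hs0 : 0 < s := by linarith
  have ht0 : 0 < t := by linarith
  have hu0 : 0 < u := by linarith
  have hs1 : 0 < s - 1 := by linarith
  have ht1 : 0 < t - 1 := by linarith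
  have hu1 : 0 < u - 1 := by linarith
  rw [Aconst, youngC_one_div hs, youngC_one_div ht, youngC_one_div hu,
    one_div_rpow_two_div_one_div hs0.le, one_div_rpow_two_div_one_div ht0.le,
    one_div_rpow_two_div_one_div hu0.le]
  have : (s - 1) ^ (s - 1) ≠ 0 := (rpow_pos_of_pos hs1 _).ne'
  have : (t - 1) ^ (t - 1) ≠ 0 := (rpow_pos_of_pos ht1 _).ne'
  have : (u - 1) ^ (u - 1) ≠ 0 := (rpow_pos_of_pos hu1 _).ne'
  have : s ^ s ≠ 0 := (rpow_pos_of_pos hs0 _).ne'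
  have : t ^ t ≠ 0 := (rpow_pos_of_pos ht0 _).ne'
  have : u ^ u ≠ 0 := (rpow_pos_of_pos hu0 _).ne'
  field_simp

theorem rpow_self_mul_rpow_self_mul_rpow_self_lt {x y : ℝ} (hx : 0 < x) (hy : 0 < y) :
    x ^ x * y ^ y * (x + y + 1) ^ (x + y + 1) <
      (x + y) ^ (x + y) * (x + 1) ^ (x + 1) * (y + 1) ^ (y + 1) := by
  have h := strictConvexOn_mul_log_sub_add_one_mul_log.add_lt_add_apply_zero hx hy
  simp only [zero_mul, zero_add, one_mul, log_one, sub_zero] at h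
  have hx1 : 0 < x + 1 := by positivity
  have hy1 : 0 < y + 1 := by positivity
  have hxy1 : 0 < x + y + 1 := by positivity
  simp only [rpow_def_of_pos, hx, hy, hx1, hy1, hxy1, add_pos hx hy, ← exp_add, exp_lt_exp]
  linarith

theorem A_gt_one (x y : ℝ) (hx : 0 < x) (hy : 0 < y) :
    (x + y) ^ (x + y) * (x + 1) ^ (x + 1) * (y + 1) ^ (y + 1) >
      x ^ x * y ^ y * (x + y + 1) ^ (x + y + 1) ∧
    Aconst (1 / (x + 1)) (1 / (y + 1)) (1 / (x + y + 1)) > 1 := by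
  have key := rpow_self_mul_rpow_self_mul_rpow_self_lt hx hy
  refine ⟨key, ?_⟩
  rw [Aconst_one_div (by linarith) (by linarith) (by linarith), add_sub_cancel_right,
    add_sub_cancel_right, add_sub_cancel_right, gt_iff_lt, one_lt_div (by positivity)]
  linarith
end
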